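/- arXiv:1810.12363 — 3 statements merged into one kernel-verified Lean document; each statement's English description precedes it below -/
import Mathlib

section
/- If L₊ and L₋ are (densely defined self-adjoint) operators on real L², f is a real-valued function with L₋^{1/2} L₊ L₋^{1/2} f = -μ² f for some μ > 0, and one sets g := L₋^{1/2} f - (i/μ) L₊ L₋^{1/2} f, then the operator ℒ defined by ℒu = L₊ Re(u) + i L₋ Im(u) satisfies -iℒg = μg. In particular -iℒ has the positive eigenvalue μ provided L₋^{1/2} f ≠ 0. -/
/-!
Write `u := L₋^{1/2} f`. Then `g = u + i v` with `v := -μ⁻¹ L₊ u`, and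
`L₋ v = -μ⁻¹ L₋^{1/2} (L₋^{1/2} L₊ L₋^{1/2} f) = μ u`, so
`-iℒg = -i L₊ u + L₋ v = μ (u - (i/μ) L₊ u) = μ g`.
Since `Re g = u`, the eigenvector `g` is nonzero as soon as `u` is.
-/

open Complex

namespace Complex

theorem re_ofReal_sub_I_div_mul_ofReal (a b μ : ℝ) : ((a : ℂ) - I / μ * b).re = a := by
  simp [div_re, div_im]

theorem im_ofReal_sub_I_div_mul_ofReal (a b μ : ℝ) : ((a : ℂ) - I / μ * b).im = -μ⁻¹ * b := by
  simp [div_re, div_im, normSq]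

theorem neg_I_mul_ofReal_add_I_mul {a b μ : ℝ} (hμ : μ ≠ 0) :
    -I * ((b : ℂ) + I * (μ * a)) = μ * (a - I / μ * b) := by
  have hμC : (μ : ℂ) ≠ 0 := ofReal_ne_zero.mpr hμ
  field_simp
  linear_combination (-(μ : ℂ) * a) * I_sq

end Complex

theorem LinearMap.apply_apply_eq_smul_of_sqrt_conj {R M : Type*} [Semiring R] [AddCommMonoid M]
    [Module R M] {Lp Lm S : M →ₗ[R] M} (hsqrt : ∀ v, Lm v = S (S v)) {c : R} {f : M}
    (heig : S (Lp (S f)) = c • f) : Lm (Lp (S f)) = c • S f := by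
  rw [hsqrt, heig, map_smul]

theorem eigenvalue_of_minus_i_L {X : Type*}
    (Lp Lm S : (X → ℝ) →ₗ[ℝ] (X → ℝ))
    (hsqrt : ∀ v, Lm v = S (S v))
    (μ : ℝ) (hμ : 0 < μ) (f : X → ℝ)
    (heig : S (Lp (S f)) = (-(μ ^ 2)) • f)
    (g : X → ℂ)
    (hg : g = fun x => (S f x : ℂ) - (Complex.I / μ) * (Lp (S f) x : ℂ)) :
    (∀ x, -Complex.I *
        ((Lp (fun y => (g y).re) x : ℂ) + Complex.I * (Lm (fun y => (g y).im) x : ℂ))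
      = (μ : ℂ) * g x) ∧ (S f ≠ 0 → g ≠ 0) := by
  have hre : (fun y => (g y).re) = S f := by
    funext y
    simp only [hg, re_ofReal_sub_I_div_mul_ofReal]
  have him : (fun y => (g y).im) = (-μ⁻¹) • Lp (S f) := by
    funext y
    simp only [hg, im_ofReal_sub_I_div_mul_ofReal, Pi.smul_apply, smul_eq_mul]
  have hLm : Lm (fun y => (g y).im) = μ • S f := by
    rw [him, map_smul, LinearMap.apply_apply_eq_smul_of_sqrt_conj hsqrt heig, smul_smul]
    congr 1
    field_simp
  refine ⟨fun x => ?_, fun hSf hg0 => hSf ?_⟩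
  · rw [hre, hLm, hg, Pi.smul_apply, smul_eq_mul, ofReal_mul]
    exact neg_I_mul_ofReal_add_I_mul hμ.ne'
  · rw [← hre, hg0]
    rfl
end

section
/- Let L be a self-adjoint operator on a real Hilbert space with exactly one negative eigenvalue -e < 0 (e > 0) with normalized eigenvector v, and suppose L is nonnegative on {v}^⊥. Let f, w₂ satisfy: f = a₁v + w₁ and ψ = a₂v + w₂ with w₁, w₂ ⊥ v, ⟨Lw₁, w₂⟩ = a₁a₂e, and ⟨Lw₂, w₂⟩ ≤ a₂²e with ⟨Lw₂,w₂⟩ > 0. Then ⟨Lf, f⟩ ≥ 0 (by Cauchy–Schwarz applied to the positive form induced by L on {v}^⊥). -/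
open RealInnerProductSpace

theorem gss_positivity {H : Type*}
    [NormedAddCommGroup H] [InnerProductSpace ℝ H]
    (L : H →L[ℝ] H)
    (hLsym : ∀ u v : H, ⟪L u, v⟫ = ⟪u, L v⟫)
    (e : ℝ) (he : 0 < e) (v : H) (hv_norm : ‖v‖ = 1)
    (hv_eig : L v = (-e) • v)
    (hpos : ∀ w : H, ⟪w, v⟫ = 0 → 0 ≤ ⟪L w, w⟫)
    (a₁ a₂ : ℝ) (w₁ w₂ : H)
    (hw₁ : ⟪w₁, v⟫ = 0) (hw₂ : ⟪w₂, v⟫ = 0)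
    (f : H) (hf : f = a₁ • v + w₁)
    (hcross : ⟪L w₁, w₂⟫ = a₁ * a₂ * e)
    (hw₂bound : ⟪L w₂, w₂⟫ ≤ a₂ ^ 2 * e)
    (hw₂pos : 0 < ⟪L w₂, w₂⟫) :
    0 ≤ ⟪L f, f⟫ := by
  set A : ℝ := ⟪L w₁, w₁⟫ with hA
  set B : ℝ := ⟪L w₁, w₂⟫ with hB
  set C : ℝ := ⟪L w₂, w₂⟫ with hC
  have hsym21 : ⟪L w₂, w₁⟫ = B := by
    rw [hB, hLsym, real_inner_comm]
  have key : ∀ t : ℝ, 0 ≤ A + 2 * t * B + t ^ 2 * C := by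
    intro t
    have h0 : ⟪w₁ + t • w₂, v⟫ = 0 := by
      rw [inner_add_left, real_inner_smul_left, hw₁, hw₂]; ring
    have h1 := hpos _ h0
    have hexp : ⟪L (w₁ + t • w₂), w₁ + t • w₂⟫ = A + 2 * t * B + t ^ 2 * C := by
      rw [map_add, map_smul]
      simp only [inner_add_left, inner_add_right, real_inner_smul_left,
        real_inner_smul_right, hsym21]
      rw [← hA, ← hB, ← hC]
      ring
    rw [hexp] at h1
    exact h1
  have hCS : B ^ 2 ≤ A * C := by
    have := key (-B / C)
    have hC0 : C ≠ 0 := ne_of_gt hw₂pos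
    have : 0 ≤ A - B ^ 2 / C := by
      have h : A + 2 * (-B / C) * B + (-B / C) ^ 2 * C = A - B ^ 2 / C := by
        field_simp; ring
      linarith [key (-B / C), h ▸ key (-B / C)]
    have h2 : B ^ 2 / C ≤ A := by linarith
    calc B ^ 2 = B ^ 2 / C * C := by field_simp
    _ ≤ A * C := by exact mul_le_mul_of_nonneg_right h2 (le_of_lt hw₂pos)
  have ha₂ : a₂ ≠ 0 := by
    intro h
    rw [h] at hw₂bound
    simp at hw₂bound
    linarith
  have hAbound : a₁ ^ 2 * e ≤ A := by
    -- B² = a₁²a₂²e², C ≤ a₂²e, so a₁²a₂²e² ≤ A·C ≤ A·a₂²e (need A ≥ 0)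
    have hA0 : 0 ≤ A := hpos w₁ hw₁
    have h1 : (a₁ * a₂ * e) ^ 2 ≤ A * C := by rw [← hcross]; exact hCS
    have h2 : A * C ≤ A * (a₂ ^ 2 * e) := mul_le_mul_of_nonneg_left hw₂bound hA0
    have h3 : (a₁ * a₂ * e) ^ 2 ≤ A * (a₂ ^ 2 * e) := le_trans h1 h2
    have h4 : a₁ ^ 2 * e * (a₂ ^ 2 * e) ≤ A * (a₂ ^ 2 * e) := by nlinarith
    have hpos2 : 0 < a₂ ^ 2 * e := by positivity
    exact le_of_mul_le_mul_right h4 hpos2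
  have hLv₁ : ⟪L w₁, v⟫ = 0 := by
    rw [hLsym, hv_eig, real_inner_smul_right, hw₁]; ring
  have hvw : ⟪v, w₁⟫ = 0 := by rw [real_inner_comm]; exact hw₁
  have hvv : ⟪v, v⟫ = (1 : ℝ) := by
    rw [real_inner_self_eq_norm_sq, hv_norm]; norm_num
  have hexpf : ⟪L f, f⟫ = -(a₁ ^ 2) * e + A := by
    rw [hf, map_add, map_smul, hv_eig]
    simp only [inner_add_left, inner_add_right, real_inner_smul_left,
      real_inner_smul_right, hvv, hvw, hLv₁]
    rw [← hA]
    ring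
  rw [hexpf]
  linarith
end

section
/- Let Ψ solve -ΔΨ + αΨ = εΨ^p + Ψ^5 on ℝ³ with sufficient regularity and decay, v solve the linearized equation -Δv + αv = (pεΨ^{p-1} + 5Ψ⁴)v, and let w(x) := x·∇Ψ(x). Then w satisfies -Δw + αw = (pεΨ^{p-1} + 5Ψ⁴)w + 2(-αΨ + εΨ^p + Ψ^5), and consequently ∫_{ℝ³}(-αΨ + εΨ^p + Ψ^5)v dx = 0. -/
/-!
`w = x · ∇Ψ` is the derivative at `λ = 1` of the dilations `Ψ (λ • x)`, and `Δ` scales by `λ²`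
under dilations; infinitesimally, `Δ (x · ∇f) = x · ∇(Δf) + 2 Δf`, which in coordinates is
`∂ᵢ (x · ∇f) = x · ∇(∂ᵢ f) + ∂ᵢ f` applied twice and summed. Writing `ΔΨ = g(Ψ)` with
`g(t) = αt - εt^p - t^5`, the chain rule gives `x · ∇(ΔΨ) = g'(Ψ) w`, which is the equation for `w`.
Subtracting `v` times this equation from `w` times the equation for `v` leaves
`2 (-αΨ + εΨ^p + Ψ^5) v = w Δv - v Δw`, whose integral vanishes by Green's identity for Schwartz
functions.
-/

open MeasureTheory

noncomputable def laplacian {d : ℕ} (f : EuclideanSpace ℝ (Fin d) → ℝ)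
    (x : EuclideanSpace ℝ (Fin d)) : ℝ :=
  ∑ i : Fin d, iteratedFDeriv ℝ 2 f x ![EuclideanSpace.single i 1, EuclideanSpace.single i 1]

open scoped Laplacian

section EulerDeriv

variable {E F : Type*} [NormedAddCommGroup E] [NormedSpace ℝ E]
  [NormedAddCommGroup F] [NormedSpace ℝ F]

/-- The Euler operator `x · ∇f`. -/
noncomputable def eulerDeriv (f : E → F) (x : E) : F := fderiv ℝ f x x

theorem ContDiff.eulerDeriv {m n : WithTop ℕ∞} {f : E → F} (hf : ContDiff ℝ n f)
    (hmn : m + 1 ≤ n) : ContDiff ℝ m (eulerDeriv f) :=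
  (hf.fderiv_right hmn).clm_apply contDiff_id

theorem HasDerivAt.eulerDeriv_comp {h : ℝ → F} {h' : F} {f : E → ℝ} {x : E}
    (hh : HasDerivAt h h' (f x)) (hf : DifferentiableAt ℝ f x) :
    eulerDeriv (h ∘ f) x = eulerDeriv f x • h' := by
  simp [eulerDeriv, (hh.hasFDerivAt.comp x hf.hasFDerivAt).fderiv]

theorem fderiv_eulerDeriv_apply {f : E → F} (hf : ContDiff ℝ 2 f) (x u : E) :
    fderiv ℝ (eulerDeriv f) x u = eulerDeriv (fun y => fderiv ℝ f y u) x + fderiv ℝ f x u := by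
  have hdf : DifferentiableAt ℝ (fderiv ℝ f) x :=
    (hf.fderiv_right (m := 1) le_rfl).differentiable one_ne_zero x
  have hsymm := hf.contDiffAt.isSymmSndFDerivAt (x := x) (by simp)
  unfold eulerDeriv
  rw [fderiv_clm_apply hdf differentiableAt_fun_id, fderiv_clm_apply hdf (differentiableAt_const u)]
  simp [hsymm x u, add_comm]

end EulerDeriv

section Laplacian

variable {E F : Type*} [NormedAddCommGroup E] [InnerProductSpace ℝ E] [FiniteDimensional ℝ E]
  [NormedAddCommGroup F] [NormedSpace ℝ F]

theorem laplacian_eq_sum_fderiv_fderiv {ι : Type*} [Fintype ι] (b : OrthonormalBasis ι ℝ E)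
    {f : E → F} (hf : ContDiff ℝ 2 f) (x : E) :
    Δ f x = ∑ i, fderiv ℝ (fun y => fderiv ℝ f y (b i)) x (b i) := by
  have hdf : DifferentiableAt ℝ (fderiv ℝ f) x :=
    (hf.fderiv_right (m := 1) le_rfl).differentiable one_ne_zero x
  simp [InnerProductSpace.laplacian_eq_iteratedFDeriv_orthonormalBasis f b,
    iteratedFDeriv_two_apply, fderiv_clm_apply hdf (differentiableAt_const _)]

theorem laplacian_eulerDeriv {f : E → F} (hf : ContDiff ℝ 3 f) (x : E) :
    Δ (eulerDeriv f) x = eulerDeriv (Δ f) x + (2 : ℝ) • Δ f x := by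
  set b := stdOrthonormalBasis ℝ E
  have hf2 : ContDiff ℝ 2 f := hf.of_le (by norm_num)
  have hpartial : ∀ i, ContDiff ℝ 2 (fun y => fderiv ℝ f y (b i)) := fun i =>
    (hf.fderiv_right (m := 2) le_rfl).clm_apply contDiff_const
  have hΔf : Δ f = fun y => ∑ i, fderiv ℝ (fun z => fderiv ℝ f z (b i)) y (b i) :=
    funext (laplacian_eq_sum_fderiv_fderiv b hf2)
  have hterm : ∀ i, fderiv ℝ (fun y => fderiv ℝ (eulerDeriv f) y (b i)) x (b i)
      = eulerDeriv (fun y => fderiv ℝ (fun z => fderiv ℝ f z (b i)) y (b i)) x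
        + (2 : ℝ) • fderiv ℝ (fun z => fderiv ℝ f z (b i)) x (b i) := by
    intro i
    have hfirst : (fun y => fderiv ℝ (eulerDeriv f) y (b i))
        = eulerDeriv (fun y => fderiv ℝ f y (b i)) + fun y => fderiv ℝ f y (b i) :=
      funext fun y => fderiv_eulerDeriv_apply hf2 y (b i)
    rw [hfirst, fderiv_add (((hpartial i).eulerDeriv le_rfl).differentiable one_ne_zero x)
      ((hpartial i).differentiable (by norm_num) x)]
    rw [add_apply, fderiv_eulerDeriv_apply (hpartial i), two_smul, add_assoc]
  have hdiff : ∀ i ∈ Finset.univ,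
      DifferentiableAt ℝ (fun y => fderiv ℝ (fun z => fderiv ℝ f z (b i)) y (b i)) x :=
    fun i _ => (((hpartial i).fderiv_right (m := 1) le_rfl).clm_apply contDiff_const).differentiable
      one_ne_zero x
  rw [laplacian_eq_sum_fderiv_fderiv b (hf.eulerDeriv (by norm_num)), hΔf,
    Finset.sum_congr rfl fun i _ => hterm i, Finset.sum_add_distrib, ← Finset.smul_sum]
  simp [eulerDeriv, fderiv_fun_sum hdiff]

theorem laplacian_eulerDeriv_of_laplacian_eq_comp {f : E → ℝ} {g : ℝ → ℝ} {g' : ℝ} {x : E}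
    (hf : ContDiff ℝ 3 f) (hΔf : Δ f = g ∘ f) (hg : HasDerivAt g g' (f x)) :
    Δ (eulerDeriv f) x = g' * eulerDeriv f x + 2 * g (f x) := by
  rw [laplacian_eulerDeriv hf, hΔf, hg.eulerDeriv_comp (hf.differentiable (by norm_num) x),
    smul_eq_mul, smul_eq_mul, mul_comm, Function.comp_apply]

end Laplacian

theorem laplacian_eq_laplacian_basisFun {d : ℕ} (f : EuclideanSpace ℝ (Fin d) → ℝ) :
    laplacian f = Δ f := by
  rw [InnerProductSpace.laplacian_eq_iteratedFDeriv_orthonormalBasis f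
    (EuclideanSpace.basisFun (Fin d) ℝ)]
  ext x
  simp [laplacian, EuclideanSpace.basisFun_apply]

namespace SchwartzMap

section EulerDeriv

variable {E F : Type*} [NormedAddCommGroup E] [NormedSpace ℝ E]
  [NormedAddCommGroup F] [NormedSpace ℝ F]

noncomputable def eulerDerivCLM : 𝓢(E, F) →L[ℝ] 𝓢(E, F) :=
  (bilinLeftCLM (ContinuousLinearMap.id ℝ (E →L[ℝ] F))
    (ContinuousLinearMap.id ℝ E).hasTemperateGrowth).comp (fderivCLM ℝ E F)

@[simp]
theorem coe_eulerDerivCLM (f : 𝓢(E, F)) : ⇑(eulerDerivCLM f) = _root_.eulerDeriv ⇑f := rfl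

end EulerDeriv

theorem integral_mul_laplacian_sub_laplacian_mul {E : Type*} [NormedAddCommGroup E]
    [InnerProductSpace ℝ E] [FiniteDimensional ℝ E] [MeasurableSpace E] [BorelSpace E]
    {μ : Measure E} [μ.IsAddHaarMeasure] (f g : 𝓢(E, ℝ)) :
    ∫ x, (f x * Δ (⇑g) x - Δ (⇑f) x * g x) ∂μ = 0 := by
  simp_rw [← laplacian_apply]
  have hint (f g : 𝓢(E, ℝ)) : Integrable (fun x => f x * g x) μ :=
    (pairing (ContinuousLinearMap.mul ℝ ℝ) f g).integrable
  rw [integral_sub (hint f (Δ g)) (hint (Δ f) g),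
    integral_mul_laplacian_right_eq_left, sub_self]

end SchwartzMap

open SchwartzMap

theorem scaling_derivative_identity_general (α ε p : ℝ)
    (Ψ v : SchwartzMap (EuclideanSpace ℝ (Fin 3)) ℝ)
    (hΨpos : ∀ x, 0 < Ψ x)
    (hΨeq : ∀ x, -laplacian (⇑Ψ) x + α * Ψ x = ε * Ψ x ^ p + Ψ x ^ (5 : ℕ))
    (hveq : ∀ x, -laplacian (⇑v) x + α * v x
        = (p * ε * Ψ x ^ (p - 1) + 5 * Ψ x ^ (4 : ℕ)) * v x)
    (w : EuclideanSpace ℝ (Fin 3) → ℝ)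
    (hw : w = fun x => fderiv ℝ (⇑Ψ) x x) :
    (∀ x, -laplacian w x + α * w x
        = (p * ε * Ψ x ^ (p - 1) + 5 * Ψ x ^ (4 : ℕ)) * w x
          + 2 * (-(α * Ψ x) + ε * Ψ x ^ p + Ψ x ^ (5 : ℕ))) ∧
    (∫ x : EuclideanSpace ℝ (Fin 3),
        (-(α * Ψ x) + ε * Ψ x ^ p + Ψ x ^ (5 : ℕ)) * v x) = 0 := by
  obtain rfl : w = eulerDerivCLM Ψ := hw
  simp only [laplacian_eq_laplacian_basisFun] at hΨeq hveq ⊢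
  set g : ℝ → ℝ := fun t => α * t - (ε * t ^ p + t ^ 5)
  have hΔΨ : Δ ⇑Ψ = g ∘ Ψ := funext fun x => by
    simp only [g, Function.comp_apply]; linarith [hΨeq x]
  have hg (x) : HasDerivAt g (α - (p * ε * Ψ x ^ (p - 1) + 5 * Ψ x ^ (4 : ℕ))) (Ψ x) :=
    (((hasDerivAt_id' (Ψ x)).const_mul α).fun_sub
      (((Real.hasDerivAt_rpow_const (p := p) (Or.inl (hΨpos x).ne')).const_mul ε).fun_add
        (hasDerivAt_pow 5 (Ψ x)))).congr_deriv (by norm_num; ring)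
  have hweq (x) : -Δ (⇑(eulerDerivCLM Ψ)) x + α * eulerDerivCLM Ψ x
      = (p * ε * Ψ x ^ (p - 1) + 5 * Ψ x ^ (4 : ℕ)) * eulerDerivCLM Ψ x
        + 2 * (-(α * Ψ x) + ε * Ψ x ^ p + Ψ x ^ (5 : ℕ)) := by
    have hΔw :=
      laplacian_eulerDeriv_of_laplacian_eq_comp (by exact_mod_cast Ψ.smooth 3) hΔΨ (hg x)
    rw [← coe_eulerDerivCLM] at hΔw
    simp only [g] at hΔw
    linear_combination -hΔw
  refine ⟨hweq, ?_⟩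
  have hgreen (x) : (-(α * Ψ x) + ε * Ψ x ^ p + Ψ x ^ (5 : ℕ)) * v x
      = (eulerDerivCLM Ψ x * Δ (⇑v) x - Δ (⇑(eulerDerivCLM Ψ)) x * v x) / 2 := by
    linear_combination (eulerDerivCLM Ψ x * hveq x - v x * hweq x) / 2
  simp_rw [hgreen]
  rw [integral_div, integral_mul_laplacian_sub_laplacian_mul, zero_div]

theorem scaling_derivative_identity (α ε p : ℝ) (hα : 0 < α) (hε : 0 < ε)
    (hp1 : 1 < p) (hp2 : p < 5)
    (Ψ v : SchwartzMap (EuclideanSpace ℝ (Fin 3)) ℝ)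
    (hΨpos : ∀ x, 0 < Ψ x)
    (hvrad : ∀ x y : EuclideanSpace ℝ (Fin 3), ‖x‖ = ‖y‖ → v x = v y)
    (hΨeq : ∀ x, -laplacian (⇑Ψ) x + α * Ψ x = ε * Ψ x ^ p + Ψ x ^ (5 : ℕ))
    (hveq : ∀ x, -laplacian (⇑v) x + α * v x
        = (p * ε * Ψ x ^ (p - 1) + 5 * Ψ x ^ (4 : ℕ)) * v x)
    (w : EuclideanSpace ℝ (Fin 3) → ℝ)
    (hw : w = fun x => fderiv ℝ (⇑Ψ) x x) :
    (∀ x, -laplacian w x + α * w x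
        = (p * ε * Ψ x ^ (p - 1) + 5 * Ψ x ^ (4 : ℕ)) * w x
          + 2 * (-(α * Ψ x) + ε * Ψ x ^ p + Ψ x ^ (5 : ℕ))) ∧
    (∫ x : EuclideanSpace ℝ (Fin 3),
        (-(α * Ψ x) + ε * Ψ x ^ p + Ψ x ^ (5 : ℕ)) * v x) = 0 :=
  scaling_derivative_identity_general α ε p Ψ v hΨpos hΨeq hveq w hw
end
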